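/- Let Γ₁ and Γ₂ be simple graphs on finite vertex types, each 3-regular (every vertex has degree 3). For i = 1, 2, let uᵢ and vᵢ be adjacent vertices of Γᵢ and let Γᵢ' be the graph obtained from Γᵢ by deleting the edge {uᵢ, vᵢ}. If Γ₁' and Γ₂' are isomorphic as graphs, then Γ₁ and Γ₂ are isomorphic as graphs. (If two trivalent graphs are non-isomorphic, then the graphs obtained from them by deleting one edge each are also non-isomorphic.) -/
import Mathlib

open SimpleGraph

/-- Degree count (as `Set.ncard` of the neighbor set) in a 3-regular graph
after deleting the edge `{u, v}`: it equals 2 exactly at `u` and `v`. -/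
lemma deleteEdge_ncard_eq_two_iff {V : Type*} [Fintype V] (Γ : SimpleGraph V)
    [DecidableRel Γ.Adj] (h3 : ∀ w : V, Γ.degree w = 3) {u v : V}
    (huv : Γ.Adj u v) (w : V) :
    ((Γ.deleteEdges {s(u, v)}).neighborSet w).ncard = 2 ↔ w = u ∨ w = v := by
  classical
  have hdeg : ∀ x : V, (Γ.neighborSet x).ncard = 3 := by
    intro x
    rw [← Nat.card_coe_set_eq, Nat.card_eq_fintype_card,
      card_neighborSet_eq_degree, h3]
  by_cases hw : w = u ∨ w = v
  · rcases hw with rfl | rfl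
    · have hset : (Γ.deleteEdges {s(w, v)}).neighborSet w
          = Γ.neighborSet w \ {v} := by
        ext x
        simp only [mem_neighborSet, deleteEdges_adj, Set.mem_singleton_iff,
          Set.mem_diff, Sym2.congr_right]
      rw [hset,
        Set.ncard_diff_singleton_of_mem (show v ∈ Γ.neighborSet w from huv),
        hdeg]
      simp
    · have hset : (Γ.deleteEdges {s(u, w)}).neighborSet w
          = Γ.neighborSet w \ {u} := by
        ext x
        simp only [mem_neighborSet, deleteEdges_adj, Set.mem_singleton_iff,
          Set.mem_diff]
        constructor
        · rintro ⟨h, hne⟩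
          exact ⟨h, fun hx => hne (by rw [hx, Sym2.eq_swap])⟩
        · rintro ⟨h, hne⟩
          refine ⟨h, fun hx => hne ?_⟩
          rcases Sym2.eq_iff.mp hx with ⟨h1, -⟩ | ⟨-, h2⟩
          · exact absurd h1.symm huv.ne
          · exact h2
      rw [hset,
        Set.ncard_diff_singleton_of_mem (show u ∈ Γ.neighborSet w from huv.symm),
        hdeg]
      simp
  · push_neg at hw
    have hset : (Γ.deleteEdges {s(u, v)}).neighborSet w = Γ.neighborSet w := by
      ext x
      simp only [mem_neighborSet, deleteEdges_adj, Set.mem_singleton_iff]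
      refine ⟨fun h => h.1, fun h => ⟨h, fun hx => ?_⟩⟩
      rcases Sym2.eq_iff.mp hx with ⟨h1, -⟩ | ⟨h1, -⟩
      · exact hw.1 h1
      · exact hw.2 h1
    rw [hset, hdeg]
    simp [hw.1, hw.2]

/-- Restoring adjacency: `Γ.Adj a b` iff `a, b` are adjacent after deleting
`{u, v}`, or `{a, b} = {u, v}`. -/
lemma adj_iff_deleteEdge {V : Type*} (Γ : SimpleGraph V) {u v : V}
    (huv : Γ.Adj u v) (a b : V) :
    Γ.Adj a b ↔ (Γ.deleteEdges {s(u, v)}).Adj a b ∨ s(a, b) = s(u, v) := by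
  simp only [deleteEdges_adj, Set.mem_singleton_iff]
  constructor
  · intro h
    by_cases hx : s(a, b) = s(u, v)
    · exact Or.inr hx
    · exact Or.inl ⟨h, hx⟩
  · rintro (⟨h, -⟩ | hx)
    · exact h
    · rcases Sym2.eq_iff.mp hx with ⟨rfl, rfl⟩ | ⟨rfl, rfl⟩
      · exact huv
      · exact huv.symm

/-- If two trivalent graphs become isomorphic after deleting one edge from
each, then they were isomorphic to begin with: for `i = 1, 2`, let `Γᵢ` be a
3-regular simple graph on a finite vertex type and `Γᵢ'` the graph obtained
from `Γᵢ` by deleting one edge `{uᵢ, vᵢ}`; if `Γ₁' ≅ Γ₂'` then `Γ₁ ≅ Γ₂`. -/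
theorem deleteEdge_iso {V₁ V₂ : Type*} [Fintype V₁] [Fintype V₂]
    (Γ₁ : SimpleGraph V₁) (Γ₂ : SimpleGraph V₂)
    [DecidableRel Γ₁.Adj] [DecidableRel Γ₂.Adj]
    (h₁ : ∀ w : V₁, Γ₁.degree w = 3) (h₂ : ∀ w : V₂, Γ₂.degree w = 3)
    (u₁ v₁ : V₁) (huv₁ : Γ₁.Adj u₁ v₁)
    (u₂ v₂ : V₂) (huv₂ : Γ₂.Adj u₂ v₂)
    (hiso : Nonempty (Γ₁.deleteEdges {s(u₁, v₁)} ≃g Γ₂.deleteEdges {s(u₂, v₂)})) :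
    Nonempty (Γ₁ ≃g Γ₂) := by
  classical
  obtain ⟨φ⟩ := hiso
  have hcard : ∀ w : V₁,
      ((Γ₂.deleteEdges {s(u₂, v₂)}).neighborSet (φ w)).ncard
        = ((Γ₁.deleteEdges {s(u₁, v₁)}).neighborSet w).ncard := by
    intro w
    rw [← Nat.card_coe_set_eq, ← Nat.card_coe_set_eq]
    exact (Nat.card_congr (φ.mapNeighborSet w)).symm
  have himg : ∀ w : V₁, w = u₁ ∨ w = v₁ → φ w = u₂ ∨ φ w = v₂ := by
    intro w hw
    rw [← deleteEdge_ncard_eq_two_iff Γ₂ h₂ huv₂, hcard,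
      deleteEdge_ncard_eq_two_iff Γ₁ h₁ huv₁]
    exact hw
  have hne : φ u₁ ≠ φ v₁ := fun h => huv₁.ne (φ.injective h)
  have hpair : s(φ u₁, φ v₁) = s(u₂, v₂) := by
    rcases himg u₁ (Or.inl rfl) with h1 | h1 <;>
      rcases himg v₁ (Or.inr rfl) with h2 | h2 <;>
      rw [h1, h2] at hne ⊢ <;>
      first
        | exact absurd rfl hne
        | rfl
        | exact Sym2.eq_swap
  refine ⟨⟨φ.toEquiv, ?_⟩⟩
  intro a b
  show Γ₂.Adj (φ a) (φ b) ↔ Γ₁.Adj a b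
  rw [adj_iff_deleteEdge Γ₁ huv₁, adj_iff_deleteEdge Γ₂ huv₂]
  constructor
  · rintro (h | h)
    · exact Or.inl (φ.map_rel_iff.mp h)
    · refine Or.inr ?_
      have : Sym2.map φ s(a, b) = Sym2.map φ s(u₁, v₁) := by
        simpa [Sym2.map_pair_eq] using h.trans hpair.symm
      exact Sym2.map.injective φ.injective this
  · rintro (h | h)
    · exact Or.inl (φ.map_rel_iff.mpr h)
    · refine Or.inr ?_
      rcases Sym2.eq_iff.mp h with ⟨rfl, rfl⟩ | ⟨rfl, rfl⟩
      · exact hpair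
      · rw [Sym2.eq_swap]; exact hpair
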